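/- Existence of compatible pairs is upward closed in ε: if there exists an ε-compatible pair of maps between merge trees (X₁, f) and (X₂, g), then for every ε′ ≥ ε there exists an ε′-compatible pair between them. -/
import Mathlib


/-- A merge tree: a poset `X` (`x ≤ y` meaning `y` is an ancestor of `x`) with a
height function `h` such that heights strictly increase towards ancestors, the
ancestors of any point form a chain, and every point `x` has an ancestor
`shift x t` (written `x^t`) at height `h x + t` for every `t ≥ 0`. -/
structure MergeTree (X : Type*) [PartialOrder X] where
  h : X → ℝ
  mono : ∀ {x y : X}, x < y → h x < h y
  chain : ∀ x y z : X, x ≤ y → x ≤ z → y ≤ z ∨ z ≤ y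
  shift : X → ℝ → X
  le_shift : ∀ x t, 0 ≤ t → x ≤ shift x t
  h_shift : ∀ x t, 0 ≤ t → h (shift x t) = h x + t


/-- An `ε`-shift map between merge trees: order-preserving and raising heights by `ε`. -/
def IsShiftMap {X Y : Type*} [PartialOrder X] [PartialOrder Y]
    (T₁ : MergeTree X) (T₂ : MergeTree Y) (ε : ℝ) (α : X → Y) : Prop :=
  (∀ u v : X, u ≤ v → α u ≤ α v) ∧ ∀ u : X, T₂.h (α u) = T₁.h u + ε


/-- An `ε`-compatible pair of maps between merge trees. -/
def IsCompatiblePair {X Y : Type*} [PartialOrder X] [PartialOrder Y]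
    (T₁ : MergeTree X) (T₂ : MergeTree Y) (ε : ℝ) (α : X → Y) (β : Y → X) : Prop :=
  IsShiftMap T₁ T₂ ε α ∧ IsShiftMap T₂ T₁ ε β ∧
  (∀ u : X, β (α u) = T₁.shift u (2 * ε)) ∧ (∀ w : Y, α (β w) = T₂.shift w (2 * ε))

lemma MergeTree.h_mono {X : Type*} [PartialOrder X] (T : MergeTree X) {x y : X}
    (hxy : x ≤ y) : T.h x ≤ T.h y := by
  rcases eq_or_lt_of_le hxy with rfl | h
  · exact le_rfl
  · exact (T.mono h).le

/-- Ancestors of a point at equal heights are equal. -/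
lemma MergeTree.eq_of_h_eq {X : Type*} [PartialOrder X] (T : MergeTree X) {x y z : X}
    (hxy : x ≤ y) (hxz : x ≤ z) (hh : T.h y = T.h z) : y = z := by
  rcases T.chain x y z hxy hxz with h | h
  · rcases eq_or_lt_of_le h with rfl | h
    · rfl
    · exact absurd hh (ne_of_lt (T.mono h))
  · rcases eq_or_lt_of_le h with rfl | h
    · rfl
    · exact absurd hh.symm (ne_of_lt (T.mono h))

lemma MergeTree.shift_shift {X : Type*} [PartialOrder X] (T : MergeTree X) (x : X)
    {s t : ℝ} (hs : 0 ≤ s) (ht : 0 ≤ t) :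
    T.shift (T.shift x s) t = T.shift x (s + t) := by
  refine T.eq_of_h_eq ((T.le_shift x s hs).trans (T.le_shift _ t ht))
    (T.le_shift x (s + t) (by linarith)) ?_
  rw [T.h_shift _ t ht, T.h_shift x s hs, T.h_shift x (s + t) (by linarith)]
  ring

/-- Existence of compatible pairs is upward closed in ε. -/
theorem compatiblePair_mono {X Y : Type*} [PartialOrder X] [PartialOrder Y]
    (T₁ : MergeTree X) (T₂ : MergeTree Y) {ε ε' : ℝ} (hε : 0 ≤ ε) (hεε' : ε ≤ ε')
    (h : ∃ (α : X → Y) (β : Y → X), IsCompatiblePair T₁ T₂ ε α β) :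
    ∃ (α : X → Y) (β : Y → X), IsCompatiblePair T₁ T₂ ε' α β := by
  obtain ⟨α, β, ⟨⟨αmono, αh⟩, ⟨βmono, βh⟩, hβα, hαβ⟩⟩ := h
  set δ := ε' - ε with hδdef
  have hδ : 0 ≤ δ := by linarith
  have hε' : 0 ≤ ε' := le_trans hε hεε'
  refine ⟨fun u => T₂.shift (α u) δ, fun w => T₁.shift (β w) δ, ?_, ?_, ?_, ?_⟩
  · refine ⟨fun u v huv => ?_, fun u => by rw [T₂.h_shift _ δ hδ, αh]; ring⟩
    have h1 : α u ≤ T₂.shift (α u) δ := T₂.le_shift _ δ hδ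
    have h2 : α u ≤ T₂.shift (α v) δ := (αmono u v huv).trans (T₂.le_shift _ δ hδ)
    rcases T₂.chain _ _ _ h1 h2 with h | h
    · exact h
    · rcases eq_or_lt_of_le h with h | h
      · exact h.ge
      · exfalso
        have := T₂.mono h
        rw [T₂.h_shift _ δ hδ, T₂.h_shift _ δ hδ] at this
        have := T₂.h_mono (αmono u v huv)
        linarith
  · refine ⟨fun u v huv => ?_, fun w => by rw [T₁.h_shift _ δ hδ, βh]; ring⟩
    have h1 : β u ≤ T₁.shift (β u) δ := T₁.le_shift _ δ hδ
    have h2 : β u ≤ T₁.shift (β v) δ := (βmono u v huv).trans (T₁.le_shift _ δ hδ)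
    rcases T₁.chain _ _ _ h1 h2 with h | h
    · exact h
    · rcases eq_or_lt_of_le h with h | h
      · exact h.ge
      · exfalso
        have := T₁.mono h
        rw [T₁.h_shift _ δ hδ, T₁.h_shift _ δ hδ] at this
        have := T₁.h_mono (βmono u v huv)
        linarith
  · intro u
    have key : β (T₂.shift (α u) δ) = T₁.shift (β (α u)) δ := by
      refine T₁.eq_of_h_eq (x := β (α u))
        (βmono _ _ (T₂.le_shift _ δ hδ)) (T₁.le_shift _ δ hδ) ?_
      rw [βh, T₂.h_shift _ δ hδ, T₁.h_shift _ δ hδ, βh]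
      ring
    dsimp only; rw [key, T₁.shift_shift _ hδ hδ, hβα, T₁.shift_shift _ (by linarith) (by linarith)]
    congr 1; ring
  · intro w
    have key : α (T₁.shift (β w) δ) = T₂.shift (α (β w)) δ := by
      refine T₂.eq_of_h_eq (x := α (β w))
        (αmono _ _ (T₁.le_shift _ δ hδ)) (T₂.le_shift _ δ hδ) ?_
      rw [αh, T₁.h_shift _ δ hδ, T₂.h_shift _ δ hδ, αh]
      ring
    dsimp only; rw [key, T₂.shift_shift _ hδ hδ, hαβ, T₂.shift_shift _ (by linarith) (by linarith)]
    congr 1; ring
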